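/- arXiv:2311.07754 — 7 statements merged into one kernel-verified Lean document; each statement's English description precedes it below -/
import Mathlib

section
/- In the linear contract setting, fix a prior π and an action a*. If a* is a best response (exactly optimal for the agent) under both contracts p̄ − β and p̄ + β (with β > 0), then under contract p̄ the action a* strictly dominates: U(a*, p̄, π) ≥ U(a, p̄, π) + Δ_c·β for every action a ≠ a*, where Δ_c > 0 is the minimum gap between costs of distinct actions. -/
/-- If `a*` is an exact best response for the agent under both linear
contracts `p̄ - β` and `p̄ + β` (with `β > 0`), then under `p̄` it dominates every
other action by a margin of at least `Δc · β`, where `Δc > 0` is the minimum gap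
between the (pairwise distinct) costs. -/
theorem best_response_margin {A : Type*} (f c : A → ℝ)
    (hf : ∀ a, f a ∈ Set.Icc (0:ℝ) 1) (hc : ∀ a, c a ∈ Set.Icc (0:ℝ) 1)
    (Δc : ℝ) (hΔ : 0 < Δc)
    (hgap : ∀ a₁ a₂ : A, a₁ ≠ a₂ → Δc ≤ |c a₁ - c a₂|)
    (pbar β : ℝ) (hβ : 0 < β)
    (hlo : 0 ≤ pbar - β) (hhi : pbar + β ≤ 1)
    (astar : A)
    (h₁ : ∀ a, (pbar - β) * f a - c a ≤ (pbar - β) * f astar - c astar)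
    (h₂ : ∀ a, (pbar + β) * f a - c a ≤ (pbar + β) * f astar - c astar) :
    ∀ a, a ≠ astar →
      pbar * f a - c a + Δc * β ≤ pbar * f astar - c astar := by
  intro a ha
  have hg := hgap a astar ha
  have H1 := h₁ a
  have H2 := h₂ a
  rcases abs_cases (c a - c astar) with ⟨he, _⟩ | ⟨he, _⟩ <;> rw [he] at hg
  · rcases le_or_gt (f a) (f astar) with hfa | hfa
    · nlinarith [mul_nonneg hβ.le (sub_nonneg.2 hfa), mul_nonneg (sub_nonneg.2 hfa) hΔ.le]
    · nlinarith [mul_pos hβ (sub_pos.2 hfa),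
        mul_nonneg (mul_nonneg hβ.le (sub_pos.2 hfa).le) (sub_nonneg.2 hhi)]
  · have hfa : f a < f astar := by nlinarith
    nlinarith [mul_pos hβ (sub_pos.2 hfa), mul_nonneg hβ.le (sub_nonneg.2 hhi),
      mul_pos (sub_pos.2 hfa) hβ]
end

section
/- Monotonicity of the optimistic approximate best response value in linear contracts: for any prior π, any ε ≥ 0, and any two contracts p₁ ≥ p₂, the maximum expected outcome value achievable among the agent's ε-approximate best responses is monotone: max over a ∈ B(p₁,π,ε) of f(π,a) ≥ max over a ∈ B(p₂,π,ε) of f(π,a). -/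
/-- Monotonicity of the optimistic approximate best-response value in
linear contracts: for `p₁ ≥ p₂` and `ε ≥ 0`, the maximum expected outcome value
`f` over the agent's `ε`-best responses to `p₁` is at least that for `p₂`.
Here `B(p,ε) = {a | ∀ a', U(a',p) ≤ U(a,p) + ε}` with `U(a,p) = p·f a − c a`. -/
theorem optimistic_value_monotone {A : Type*} [Fintype A] [Nonempty A]
    (f c : A → ℝ) (ε : ℝ) (hε : 0 ≤ ε) (p₁ p₂ : ℝ) (h : p₂ ≤ p₁) :
    sSup (f '' {a : A | ∀ a', p₂ * f a' - c a' ≤ p₂ * f a - c a + ε}) ≤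
      sSup (f '' {a : A | ∀ a', p₁ * f a' - c a' ≤ p₁ * f a - c a + ε}) := by
  have hbdd : BddAbove (f '' {a : A | ∀ a', p₁ * f a' - c a' ≤ p₁ * f a - c a + ε}) :=
    (Set.toFinite _).bddAbove
  obtain ⟨a₀, ha₀⟩ := Finite.exists_max (fun a : A => p₂ * f a - c a)
  have hne₂ : (f '' {a : A | ∀ a', p₂ * f a' - c a' ≤ p₂ * f a - c a + ε}).Nonempty :=
    ⟨f a₀, a₀, fun a' => by have := ha₀ a'; linarith, rfl⟩
  apply csSup_le hne₂
  rintro x ⟨a, ha, rfl⟩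
  have : Nonempty {a' : A // f a ≤ f a'} := ⟨⟨a, le_refl _⟩⟩
  obtain ⟨a₁, ha₁⟩ := Finite.exists_max (fun b : {a' : A // f a ≤ f a'} => p₁ * f b.1 - c b.1)
  have hmem : a₁.1 ∈ {a : A | ∀ a', p₁ * f a' - c a' ≤ p₁ * f a - c a + ε} := by
    intro a'
    rcases le_or_gt (f a) (f a') with hle | hlt
    · have := ha₁ ⟨a', hle⟩
      simp only at this
      linarith
    · have h1 := ha a'
      have h2 := ha₁ ⟨a, le_refl _⟩
      simp only at h1 h2 ha
      nlinarith [mul_nonneg (sub_nonneg.2 h) (sub_nonneg.2 hlt.le)]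
  calc f a ≤ f a₁.1 := a₁.2
    _ ≤ _ := le_csSup hbdd ⟨a₁.1, hmem, rfl⟩
end

section
/- Existence of a well-separated contract in a short interval: fix a prior π, a finite action set 𝒜 with pairwise distinct costs, and parameters β, δ > 0. Suppose p₀ ∈ [0, 1 − |𝒜|(β+δ)]. Then there exists a subinterval [ℓ, ℓ + δ] ⊆ [p₀, p₀ + |𝒜|(β+δ)] such that every contract p ∈ [ℓ, ℓ + δ] has a unique best response a*(p) and U(a*(p), p, π) ≥ U(a, p, π) + Δ_c·β/2 for all a ≠ a*(p). -/
open Set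

section AuxStable

variable {A : Type*} [Fintype A] [Nonempty A]

/-- agent utility -/
private def uu (f c : A → ℝ) (a : A) (p : ℝ) : ℝ := p * f a - c a

private def isBR (f c : A → ℝ) (a : A) (p : ℝ) : Prop := ∀ x, uu f c x p ≤ uu f c a p

private def Tie (f c : A → ℝ) (p : ℝ) : Prop :=
  ∃ a b : A, a ≠ b ∧ isBR f c a p ∧ isBR f c b p

private lemma exists_BR (f c : A → ℝ) (p : ℝ) : ∃ a, isBR f c a p := by
  obtain ⟨b, -, hb⟩ := Finset.exists_max_image Finset.univ (fun a => uu f c a p)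
    Finset.univ_nonempty
  exact ⟨b, fun x => hb x (Finset.mem_univ x)⟩

/-- strictness of f among distinct tied best responses -/
private lemma f_lt_of_tied (f c : A → ℝ) (Δc : ℝ) (hΔ : 0 < Δc)
    (hgap : ∀ a₁ a₂ : A, a₁ ≠ a₂ → Δc ≤ |c a₁ - c a₂|)
    {q : ℝ} {a b : A} (hne : a ≠ b) (hbq : isBR f c b q) (haq : isBR f c a q)
    (hle : f a ≤ f b) : f a < f b := by
  rcases lt_or_eq_of_le hle with h | h
  · exact h
  · exfalso
    have hueq : uu f c a q = uu f c b q := le_antisymm (hbq a) (haq b)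
    have hceq : c a = c b := by
      simp only [uu] at hueq; rw [h] at hueq; linarith
    have := hgap a b hne
    rw [hceq] at this; simp at this; linarith

/-- a "top" tied action cannot repeat at a later tie point -/
private lemma top_no_repeat (f c : A → ℝ) (Δc : ℝ) (hΔ : 0 < Δc)
    (hgap : ∀ a₁ a₂ : A, a₁ ≠ a₂ → Δc ≤ |c a₁ - c a₂|)
    {p q : ℝ} (hpq : p < q) {b : A}
    (hbp : isBR f c b p) (hbq : isBR f c b q)
    (htq : ∀ x, isBR f c x q → f x ≤ f b)
    (ha : ∃ a, a ≠ b ∧ isBR f c a q) : False := by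
  obtain ⟨a, hne, haq⟩ := ha
  have hflt : f a < f b := f_lt_of_tied f c Δc hΔ hgap hne hbq haq (htq a haq)
  have hueq : uu f c a q = uu f c b q := le_antisymm (hbq a) (haq b)
  have hup : uu f c a p ≤ uu f c b p := hbp a
  simp only [uu] at hueq hup
  nlinarith [mul_pos (sub_pos.mpr hpq) (sub_pos.mpr hflt)]

/-- from a tie, extract the top tied action -/
private lemma tie_top (f c : A → ℝ) {q : ℝ} (h : Tie f c q) :
    ∃ b, isBR f c b q ∧ (∀ x, isBR f c x q → f x ≤ f b) ∧
      ∃ a, a ≠ b ∧ isBR f c a q := by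
  classical
  obtain ⟨a₀, b₀, hne, ha₀, hb₀⟩ := h
  set S : Finset A := Finset.univ.filter (fun x => isBR f c x q) with hS
  have ha₀S : a₀ ∈ S := by simp [hS, ha₀]
  obtain ⟨b, hbS, hb⟩ := Finset.exists_max_image S f ⟨a₀, ha₀S⟩
  have hbBR : isBR f c b q := by simpa [hS] using hbS
  refine ⟨b, hbBR, fun x hx => hb x (by simp [hS, hx]), ?_⟩
  by_cases hab : a₀ = b
  · exact ⟨b₀, by rw [← hab]; exact hne.symm, hb₀⟩
  · exact ⟨a₀, hab, ha₀⟩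

/-- forward constancy of the best response on a tie-free open interval -/
private lemma br_forward (f c : A → ℝ) (hf : ∀ a, f a ∈ Set.Icc (0:ℝ) 1)
    {L R q₁ q₂ : ℝ} (hq₁ : q₁ ∈ Ioo L R) (hq₂ : q₂ ∈ Ioo L R) (hle : q₁ ≤ q₂)
    (hno : ∀ p ∈ Ioo L R, ¬ Tie f c p)
    {a₁ : A} (h : isBR f c a₁ q₁) : isBR f c a₁ q₂ := by
  classical
  by_cases hone : ∀ a : A, a = a₁
  · intro x; rw [hone x]
  push_neg at hone
  obtain ⟨a₂, ha₂⟩ := hone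
  set D : Set ℝ := Icc q₁ q₂ ∩ ⋂ a : A, {p | uu f c a p ≤ uu f c a₁ p} with hD
  have hDclosed : IsClosed D := by
    apply IsClosed.inter isClosed_Icc
    apply isClosed_iInter
    intro a
    show IsClosed {p : ℝ | p * f a - c a ≤ p * f a₁ - c a₁}
    exact isClosed_le (by fun_prop) (by fun_prop)
  have hq₁D : q₁ ∈ D := by
    refine ⟨⟨le_refl _, hle⟩, ?_⟩
    simp only [mem_iInter, mem_setOf_eq]
    exact fun a => h a
  have hbdd : BddAbove D := ⟨q₂, fun x hx => hx.1.2⟩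
  set s := sSup D with hs
  have hsD : s ∈ D := hDclosed.csSup_mem ⟨q₁, hq₁D⟩ hbdd
  have hsBR : isBR f c a₁ s := by
    intro x
    have := hsD.2
    simp only [mem_iInter, mem_setOf_eq] at this
    exact this x
  rcases eq_or_lt_of_le hsD.1.2 with heq | hlt
  · rw [← heq]; exact hsBR
  · exfalso
    have hsI : s ∈ Ioo L R := ⟨lt_of_lt_of_le hq₁.1 hsD.1.1, lt_trans hlt hq₂.2⟩
    -- strict optimality at s
    have hstrict : ∀ a : A, a ≠ a₁ → uu f c a s < uu f c a₁ s := by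
      intro a hne
      rcases lt_or_eq_of_le (hsBR a) with h' | h'
      · exact h'
      · exfalso
        have haBR : isBR f c a s := fun x => le_of_le_of_eq (hsBR x) h'.symm
        exact hno s hsI ⟨a, a₁, hne, haBR, hsBR⟩
    set E : Finset A := Finset.univ.erase a₁ with hE
    have hEne : E.Nonempty := ⟨a₂, by simp [hE, ha₂]⟩
    obtain ⟨am, hamE, ham⟩ := Finset.exists_min_image E
      (fun a => uu f c a₁ s - uu f c a s) hEne
    set ε := uu f c a₁ s - uu f c am s with hε
    have hεpos : 0 < ε := by
      have : am ≠ a₁ := (Finset.mem_erase.mp hamE).1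
      have := hstrict am this
      simp only [hε]; linarith
    set p' := min (s + ε) q₂ with hp'
    have hsp' : s < p' := lt_min (by linarith) hlt
    have hp'q₂ : p' ≤ q₂ := min_le_right _ _
    have hp'sε : p' - s ≤ ε := by
      have : p' ≤ s + ε := min_le_left _ _
      linarith
    have hp'D : p' ∈ D := by
      refine ⟨⟨le_trans hsD.1.1 hsp'.le, hp'q₂⟩, ?_⟩
      simp only [mem_iInter, mem_setOf_eq]
      intro a
      by_cases hne : a = a₁
      · rw [hne]
      · have hεa : ε ≤ uu f c a₁ s - uu f c a s := ham a (by simp [hE, hne])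
        have hfa := hf a; have hfa₁ := hf a₁
        simp only [mem_Icc] at hfa hfa₁
        have hprod : (p' - s) * (f a - f a₁) ≤ (p' - s) * 1 :=
          mul_le_mul_of_nonneg_left (by linarith [hfa.2, hfa₁.1]) (by linarith)
        simp only [uu] at hεa ⊢
        nlinarith [hprod]
    have : p' ≤ s := le_csSup hbdd hp'D
    linarith

/-- a linear inequality valid on an open interval extends to the closed interval -/
private lemma affine_nonneg_closure {sl t L R : ℝ} (hLR : L < R)
    (h : ∀ q ∈ Ioo L R, 0 ≤ q * sl + t) : ∀ q ∈ Icc L R, 0 ≤ q * sl + t := by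
  have hc : IsClosed {q : ℝ | 0 ≤ q * sl + t} :=
    isClosed_le continuous_const (by fun_prop)
  intro q hq
  have hsub : Icc L R ⊆ {q : ℝ | 0 ≤ q * sl + t} := by
    rw [← closure_Ioo hLR.ne]
    exact hc.closure_subset_iff.mpr h
  exact hsub hq

end AuxStable

set_option maxHeartbeats 1000000 in
/-- Existence of a well-separated contract in a short interval: if
`p₀ ∈ [0, 1 − |𝒜|(β+δ)]`, then some subinterval `[ℓ, ℓ+δ]` of
`[p₀, p₀ + |𝒜|(β+δ)]` consists entirely of contracts with a unique best response
whose agent utility exceeds that of every other action by at least `Δc·β/2`. -/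
theorem exists_stable_subinterval {A : Type*} [Fintype A] [Nonempty A]
    (f c : A → ℝ)
    (hf : ∀ a, f a ∈ Set.Icc (0:ℝ) 1) (hc : ∀ a, c a ∈ Set.Icc (0:ℝ) 1)
    (Δc : ℝ) (hΔ : 0 < Δc)
    (hgap : ∀ a₁ a₂ : A, a₁ ≠ a₂ → Δc ≤ |c a₁ - c a₂|)
    (β δ : ℝ) (hβ : 0 < β) (hδ : 0 < δ)
    (p₀ : ℝ) (hp₀ : 0 ≤ p₀)
    (hp₀' : p₀ + (Fintype.card A : ℝ) * (β + δ) ≤ 1) :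
    ∃ ℓ : ℝ,
      Set.Icc ℓ (ℓ + δ) ⊆ Set.Icc p₀ (p₀ + (Fintype.card A : ℝ) * (β + δ)) ∧
      ∀ p ∈ Set.Icc ℓ (ℓ + δ),
        ∃ astar : A, ∀ a : A, a ≠ astar →
          p * f a - c a + Δc * β / 2 ≤ p * f astar - c astar := by
  classical
  set n := Fintype.card A with hn
  have hn1 : 1 ≤ n := Fintype.card_pos
  set γ := β + δ with hγdef
  have hγ : 0 < γ := by simp only [hγdef]; linarith
  -- step 1: find a tie-free open interval
  have key : ∃ k : ℕ, k < n ∧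
      ∀ p ∈ Ioo (p₀ + k * γ) (p₀ + k * γ + γ), ¬ Tie f c p := by
    by_contra hcon
    push_neg at hcon
    choose P hPmem hPtie using hcon
    -- top tied action at each chosen tie point
    have htop : ∀ k (hk : k < n), ∃ b, isBR f c b (P k hk) ∧
        (∀ x, isBR f c x (P k hk) → f x ≤ f b) ∧
        ∃ a, a ≠ b ∧ isBR f c a (P k hk) :=
      fun k hk => tie_top f c (hPtie k hk)
    choose B hB1 hB2 hB3 using htop
    -- minimal-f action
    obtain ⟨am, -, ham⟩ := Finset.exists_min_image Finset.univ f Finset.univ_nonempty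
    -- the map k ↦ B k
    set g : ℕ → A := fun k => if hk : k < n then B k hk else Classical.arbitrary A
      with hg
    have hBmem : ∀ k ∈ Finset.range n, g k ∈ Finset.univ.erase am := by
      intro k hk
      rw [Finset.mem_range] at hk
      simp only [hg, dif_pos hk]
      rw [Finset.mem_erase]
      refine ⟨?_, Finset.mem_univ _⟩
      obtain ⟨a, hane, haBR⟩ := hB3 k hk
      have : f a < f (B k hk) :=
        f_lt_of_tied f c Δc hΔ hgap hane (hB1 k hk) haBR (hB2 k hk a haBR)
      intro hEq
      have := ham a (Finset.mem_univ a)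
      rw [← hEq] at this
      linarith
    have hord : ∀ k k' (hk : k < n) (hk' : k' < n), k < k' → P k hk < P k' hk' := by
      intro k k' hk hk' hkk'
      have h1 := hPmem k hk
      have h2 := hPmem k' hk'
      rw [mem_Ioo] at h1 h2
      have hcast : (k : ℝ) + 1 ≤ (k' : ℝ) := by exact_mod_cast hkk'
      nlinarith [h1.2, h2.1, hγ]
    have hinj : Set.InjOn g (Finset.range n) := by
      intro k hk k' hk' hEq
      rw [Finset.coe_range, Set.mem_Iio] at hk hk'
      by_contra hne
      rcases lt_or_gt_of_ne hne with hlt | hlt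
      · have hEq' : B k hk = B k' hk' := by
          simpa only [hg, dif_pos hk, dif_pos hk'] using hEq
        exact top_no_repeat f c Δc hΔ hgap (hord k k' hk hk' hlt)
          (hEq' ▸ hB1 k hk) (hB1 k' hk') (hB2 k' hk') (hB3 k' hk')
      · have hEq' : B k' hk' = B k hk := by
          simpa only [hg, dif_pos hk, dif_pos hk'] using hEq.symm
        exact top_no_repeat f c Δc hΔ hgap (hord k' k hk' hk hlt)
          (hEq' ▸ hB1 k' hk') (hB1 k hk) (hB2 k hk) (hB3 k hk)
    have hcard := Finset.card_le_card_of_injOn g hBmem hinj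
    rw [Finset.card_range, Finset.card_erase_of_mem (Finset.mem_univ am),
      Finset.card_univ] at hcard
    omega
  obtain ⟨k, hkn, hno⟩ := key
  set L := p₀ + k * γ with hL
  set R := L + γ with hR
  have hLR : L < R := by simp only [hR]; linarith
  have hLp₀ : p₀ ≤ L := by
    simp only [hL]
    nlinarith [Nat.cast_nonneg (α := ℝ) k, hγ]
  have hRle : R ≤ p₀ + (n : ℝ) * γ := by
    have hcast : (k : ℝ) + 1 ≤ (n : ℝ) := by exact_mod_cast hkn
    simp only [hR, hL]
    nlinarith [hγ]
  -- constancy on (L, R)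
  set q₀ := L + γ / 2 with hq₀
  have hq₀mem : q₀ ∈ Ioo L R := by
    constructor <;> simp only [hq₀, hR] <;> linarith
  obtain ⟨a₁, ha₁⟩ := exists_BR f c q₀
  have hconst : ∀ q ∈ Ioo L R, isBR f c a₁ q := by
    intro q hq
    rcases le_total q₀ q with h | h
    · exact br_forward f c hf hq₀mem hq h hno ha₁
    · obtain ⟨a₂, ha₂⟩ := exists_BR f c q
      have h2 : isBR f c a₂ q₀ := br_forward f c hf hq hq₀mem h hno ha₂
      by_cases heq : a₂ = a₁
      · rw [← heq]; exact ha₂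
      · exact absurd ⟨a₂, a₁, heq, h2, ha₁⟩ (hno q₀ hq₀mem)
  -- extend to closed interval
  have hcl : ∀ a : A, ∀ q ∈ Icc L R, uu f c a q ≤ uu f c a₁ q := by
    intro a q hq
    have h0 : ∀ q' ∈ Ioo L R, 0 ≤ q' * (f a₁ - f a) + (c a - c a₁) := by
      intro q' hq'
      have := hconst q' hq' a
      simp only [uu] at this
      linarith [this]
    have := affine_nonneg_closure hLR h0 q hq
    simp only [uu]
    linarith
  -- assemble
  refine ⟨L + β / 2, ?_, ?_⟩
  · intro x hx
    rw [mem_Icc] at hx ⊢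
    constructor
    · linarith [hx.1]
    · have : L + β / 2 + δ ≤ R := by simp only [hR, hγdef]; linarith
      calc x ≤ L + β / 2 + δ := hx.2
        _ ≤ R := this
        _ ≤ p₀ + (n : ℝ) * γ := hRle
  · intro p hp
    rw [mem_Icc] at hp
    refine ⟨a₁, fun a hne => ?_⟩
    have hq1mem : p - β / 2 ∈ Icc L R := by
      rw [mem_Icc]
      constructor
      · linarith [hp.1]
      · have : p ≤ L + β / 2 + δ := hp.2
        simp only [hR, hγdef]; linarith
    have hq2mem : p + β / 2 ∈ Icc L R := by
      rw [mem_Icc]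
      constructor
      · linarith [hp.1, hβ]
      · have : p ≤ L + β / 2 + δ := hp.2
        simp only [hR, hγdef]; linarith
    have hq1 := hcl a _ hq1mem
    have hq2 := hcl a _ hq2mem
    simp only [uu] at hq1 hq2
    have hq1nn : 0 ≤ p - β / 2 := le_trans (le_trans hp₀ hLp₀) hq1mem.1
    have hq2le1 : p + β / 2 ≤ 1 := by
      calc p + β / 2 ≤ R := hq2mem.2
        _ ≤ p₀ + (n : ℝ) * γ := hRle
        _ ≤ 1 := by rw [hγdef] at *; exact_mod_cast hp₀'
    have hq1le1 : p - β / 2 ≤ 1 := by linarith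
    have hgap' := hgap a a₁ hne
    rcases le_total (c a₁) (c a) with hcc | hcc
    · -- c a ≥ c a₁ : use the point p + β/2 and value at 0
      have hd : Δc ≤ c a - c a₁ := by
        rwa [abs_of_nonneg (by linarith)] at hgap'
      have hq2pos : 0 < p + β / 2 := by linarith
      nlinarith [mul_nonneg hq1nn (sub_nonneg.mpr hq2),
        mul_nonneg (mul_nonneg hΔ.le (by linarith : (0:ℝ) ≤ β / 2))
          (by linarith : (0:ℝ) ≤ 1 - (p + β / 2)), hq2]
    · -- c a ≤ c a₁ : use the point p - β/2
      have hd : Δc ≤ c a₁ - c a := by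
        rw [abs_of_nonpos (by linarith)] at hgap'
        linarith
      have hs : Δc ≤ (p - β / 2) * (f a₁ - f a) := by nlinarith [hq1]
      have hspos : 0 < f a₁ - f a := by
        by_contra hcon
        push_neg at hcon
        nlinarith [mul_nonpos_of_nonneg_of_nonpos hq1nn hcon]
      have hs1 : Δc ≤ f a₁ - f a := by
        calc Δc ≤ (p - β / 2) * (f a₁ - f a) := hs
          _ ≤ 1 * (f a₁ - f a) := mul_le_mul_of_nonneg_right hq1le1 hspos.le
          _ = f a₁ - f a := one_mul _
      nlinarith [hq1, hs1]
end

section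
/- Nonexistence of optimal stable policies: in the two-action, two-contract game where action a₁ gives the principal value 1 and costs the agent 1/4, action a₂ gives the principal value 2 and costs the agent 1/2, and the policy space is {p₁ = 1/4, p₂ = 1/2} (linear contracts paying fraction p of the principal's value), there is no policy that is simultaneously (β,γ)-stable with β > 0, γ ≤ 1/2, and c-optimal with c ≤ 1/4 and ε = 0. Concretely: p₁ is not (β,γ)-stable for any β > 0, γ ≤ 1/2, and p₂ fails the optimality condition V(a*(p₂)) ≥ V(a*(p₁,0-best-responses optimistic)) − c for c ≤ 1/4. -/
noncomputable section

/-- Outcome values of the two agent actions. -/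
def val : Fin 2 → ℝ := ![1, 2]

/-- Costs of the two agent actions. -/
def cost : Fin 2 → ℝ := ![1/4, 1/2]

/-- Agent's utility under linear contract `p`. -/
def Uag (a : Fin 2) (p : ℝ) : ℝ := p * val a - cost a

/-- Principal's utility under linear contract `p`. -/
def Vpr (a : Fin 2) (p : ℝ) : ℝ := (1 - p) * val a

/-- `a` is the agent's best response to `p`, with ties broken in the principal's favor. -/
def OptBR (p : ℝ) (a : Fin 2) : Prop :=
  (∀ a', Uag a' p ≤ Uag a p) ∧
  ∀ a', (∀ a'', Uag a'' p ≤ Uag a' p) → Vpr a' p ≤ Vpr a p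

/-- `p` is `(β,γ)`-stable: every action other than the optimistic best response either
loses at least `β` of agent utility or loses at most `γ` of principal utility. -/
def IsStable (p β γ : ℝ) : Prop :=
  ∀ astar, OptBR p astar → ∀ a, a ≠ astar →
    Uag a p ≤ Uag astar p - β ∨ Vpr astar p - γ ≤ Vpr a p

lemma optbr_quarter (a : Fin 2) (h : OptBR (1/4) a) : a = 1 := by
  fin_cases a
  · exfalso
    have := h.2 1 (by intro a''; fin_cases a'' <;> simp [Uag, val, cost] <;> norm_num)
    simp [Vpr, val] at this
    norm_num at this
  · rfl

lemma optbr_half (a : Fin 2) (h : OptBR (1/2) a) : a = 1 := by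
  fin_cases a
  · exfalso
    have := h.1 1
    simp [Uag, val, cost] at this
    norm_num at this
  · rfl

/-- In the two-action, two-contract game with policy space
`{1/4, 1/2}`, the contract `1/4` is not `(β,γ)`-stable for any `β > 0`, `γ ≤ 1/2`,
and the contract `1/2` fails `c`-optimality (with `ε = 0`) for every `c ≤ 1/4`;
hence no policy is simultaneously stable and optimal with these parameters. -/
theorem no_optimal_stable_policy :
    (∀ β γ : ℝ, 0 < β → γ ≤ 1/2 → ¬ IsStable (1/4) β γ) ∧
    (∀ cO : ℝ, cO ≤ 1/4 →
      ∀ a a' : Fin 2, OptBR (1/2) a → OptBR (1/4) a' →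
        ¬ (Vpr a' (1/4) - cO ≤ Vpr a (1/2))) := by
  constructor
  · intro β γ hβ hγ hst
    have hbr : OptBR (1/4) 1 := by
      constructor
      · intro a'; fin_cases a' <;> simp [Uag, val, cost] <;> norm_num
      · intro a' _; fin_cases a' <;> simp [Vpr, val] <;> norm_num
    have := hst 1 hbr 0 (by decide)
    rcases this with h | h
    · simp [Uag, val, cost] at h; linarith
    · simp [Vpr, val] at h; linarith
  · intro cO hc a a' ha ha' hle
    rw [optbr_half a ha] at hle
    rw [optbr_quarter a' ha'] at hle
    simp [Vpr, val] at hle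
    linarith
end
end

section
/- In binary-state Bayesian persuasion where every strategy is uniquely optimal for some prior, the unit interval [0,1] of priors is partitioned into n = |𝒮| closed intervals S₁,…,Sₙ, with each strategy sᵢ the unique optimal strategy at every interior point of Sᵢ. In particular, there is a constant C > 0 lower-bounding the length of every interval, and for any two distinct strategies s, s', the slopes of μ ↦ u(s,μ) and μ ↦ u(s',μ) differ (by at least some c₁ > 0). -/
/-!
Write `u(s, μ) = u₀ s + μ · (u₁ s - u₀ s)`: each strategy is a line in `μ`. A strategy that is
uniquely optimal somewhere cannot share its slope with another one (two parallel lines are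
ordered everywhere), so the strategies can be listed by increasing slope `σ 0, …, σ m`. Two
consecutive lines cross at a single point, below which the flatter one wins and above which the
steeper one wins. The prior at which `σ k` is uniquely optimal lies strictly between the crossing
with its predecessor and the crossing with its successor, so these crossings are strictly
increasing; together with `0` and `1` they cut `[0, 1]` into `m + 1` intervals. Inside the `i`-th
interval, the values `u(σ k, μ)` strictly increase in `k` up to `k = i` and strictly decrease
afterwards, so `σ i` is the unique optimum there. The two positive constants are minima of
finitely many positive numbers.
-/

open Set

theorem exists_pos_le_of_finite {ι : Type*} [Finite ι] {f : ι → ℝ} (hf : ∀ i, 0 < f i) :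
    ∃ C, 0 < C ∧ ∀ i, C ≤ f i := by
  cases isEmpty_or_nonempty ι
  · exact ⟨1, one_pos, isEmptyElim⟩
  · obtain ⟨i, hi⟩ := Finite.exists_min f
    exact ⟨f i, hf i, hi⟩

theorem Function.Injective.exists_equiv_fin_strictMono {α β : Type*} [Fintype α] [LinearOrder β]
    {f : α → β} (hf : Function.Injective f) :
    ∃ σ : Fin (Fintype.card α) ≃ α, StrictMono (f ∘ σ) := by
  let := LinearOrder.lift' f hf
  exact ⟨(Fintype.orderIsoFinOfCardEq α rfl).toEquiv, (Fintype.orderIsoFinOfCardEq α rfl).strictMono⟩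

theorem Fin.apply_lt_of_lt_succ_of_succ_lt {m : ℕ} {α : Type*} [Preorder α] {g : Fin (m + 1) → α}
    {i : Fin (m + 1)} (hlt : ∀ k : Fin m, k.succ ≤ i → g k.castSucc < g k.succ)
    (hgt : ∀ k : Fin m, i ≤ k.castSucc → g k.succ < g k.castSucc) {j : Fin (m + 1)}
    (hji : j ≠ i) : g j < g i := by
  rcases hji.lt_or_gt with hji | hij
  · refine strictMonoOn_Iic_of_lt_succ (ψ := g) (fun k hk => ?_) (mem_Iic.2 hji.le) self_mem_Iic hji
    obtain ⟨k, rfl⟩ := Fin.eq_castSucc_of_ne_last (hk.trans_le (Fin.le_last i)).ne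
    rw [Fin.orderSucc_castSucc]
    exact hlt k (Fin.castSucc_lt_iff_succ_le.1 hk)
  · refine strictAntiOn_Ici_of_lt_pred (ψ := g) (fun k hk => ?_) self_mem_Ici (mem_Ici.2 hij.le) hij
    obtain ⟨k, rfl⟩ := Fin.eq_succ_of_ne_zero ((Fin.zero_le i).trans_lt hk).ne'
    exact hgt k (Fin.le_castSucc_iff.2 hk)

namespace BayesianPersuasion

variable {S : Type*} (u0 u1 : S → ℝ)

def payoff (s : S) (μ : ℝ) : ℝ := (1 - μ) * u0 s + μ * u1 s

def slope (s : S) : ℝ := u1 s - u0 s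

/-- The prior at which the lines of `s` and `t` meet (junk if their slopes agree). -/
noncomputable def crossing (s t : S) : ℝ := (u0 s - u0 t) / (slope u0 u1 t - slope u0 u1 s)

def IsUniquelyOptimal (s : S) (μ : ℝ) : Prop := ∀ s', s' ≠ s → payoff u0 u1 s' μ < payoff u0 u1 s μ

variable {u0 u1}

theorem slope_injective (hopt : ∀ s, ∃ μ, IsUniquelyOptimal u0 u1 s μ) :
    Function.Injective (slope u0 u1) := by
  intro s t hst
  by_contra hne
  have hconst : ∀ μ, payoff u0 u1 t μ - payoff u0 u1 s μ = u0 t - u0 s := by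
    intro μ
    simp only [payoff, slope] at hst ⊢
    linear_combination (-μ) * hst
  obtain ⟨μs, hμs⟩ := hopt s
  obtain ⟨μt, hμt⟩ := hopt t
  linarith [hconst μs, hconst μt, hμs t (Ne.symm hne), hμt s hne]

theorem payoff_sub_payoff {s t : S} (hst : slope u0 u1 s ≠ slope u0 u1 t) (μ : ℝ) :
    payoff u0 u1 t μ - payoff u0 u1 s μ =
      (slope u0 u1 t - slope u0 u1 s) * (μ - crossing u0 u1 s t) := by
  have hne : slope u0 u1 t - slope u0 u1 s ≠ 0 := sub_ne_zero.2 hst.symm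
  rw [crossing, mul_sub, mul_div_cancel₀ _ hne]
  simp only [payoff, slope]
  ring

variable {s t : S} {μ : ℝ}

theorem payoff_lt_payoff_iff_crossing_lt (h : slope u0 u1 s < slope u0 u1 t) :
    payoff u0 u1 s μ < payoff u0 u1 t μ ↔ crossing u0 u1 s t < μ := by
  rw [← sub_pos, payoff_sub_payoff h.ne, mul_pos_iff_of_pos_left (sub_pos.2 h), sub_pos]

theorem payoff_lt_payoff_iff_lt_crossing (h : slope u0 u1 s < slope u0 u1 t) :
    payoff u0 u1 t μ < payoff u0 u1 s μ ↔ μ < crossing u0 u1 s t := by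
  rw [← sub_pos, ← neg_sub, payoff_sub_payoff h.ne, ← mul_neg,
    mul_pos_iff_of_pos_left (sub_pos.2 h), neg_sub, sub_pos]

theorem IsUniquelyOptimal.lt_crossing (hμ : IsUniquelyOptimal u0 u1 s μ)
    (h : slope u0 u1 s < slope u0 u1 t) : μ < crossing u0 u1 s t :=
  (payoff_lt_payoff_iff_lt_crossing h).1 (hμ t (ne_of_apply_ne _ h.ne'))

theorem IsUniquelyOptimal.crossing_lt (hμ : IsUniquelyOptimal u0 u1 t μ)
    (h : slope u0 u1 s < slope u0 u1 t) : crossing u0 u1 s t < μ :=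
  (payoff_lt_payoff_iff_crossing_lt h).1 (hμ s (ne_of_apply_ne _ h.ne))

section Boundary

variable {m : ℕ} (σ : Fin (m + 1) ≃ S)

variable (u0 u1) in
noncomputable def boundary : Fin (m + 2) → ℝ :=
  Fin.cons 0 (Fin.snoc (fun k : Fin m => crossing u0 u1 (σ k.castSucc) (σ k.succ)) 1)

@[simp]
theorem boundary_zero : boundary u0 u1 σ 0 = 0 := by
  simp [boundary]

@[simp]
theorem boundary_last : boundary u0 u1 σ (Fin.last (m + 1)) = 1 := by
  simp [boundary, ← Fin.succ_last]

theorem boundary_castSucc_succ (k : Fin m) :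
    boundary u0 u1 σ k.castSucc.succ = crossing u0 u1 (σ k.castSucc) (σ k.succ) := by
  simp [boundary]

theorem boundary_succ_castSucc (k : Fin m) :
    boundary u0 u1 σ k.succ.castSucc = crossing u0 u1 (σ k.castSucc) (σ k.succ) := by
  rw [← Fin.succ_castSucc, boundary_castSucc_succ]

variable {σ} (hσ : StrictMono (slope u0 u1 ∘ σ))
include hσ

theorem boundary_castSucc_le {i : Fin (m + 1)} (hμ0 : 0 ≤ μ)
    (hμ : IsUniquelyOptimal u0 u1 (σ i) μ) : boundary u0 u1 σ i.castSucc ≤ μ := by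
  induction i using Fin.cases with
  | zero => simpa using hμ0
  | succ k =>
    rw [boundary_succ_castSucc]
    exact (hμ.crossing_lt (hσ k.castSucc_lt_succ)).le

theorem le_boundary_succ {i : Fin (m + 1)} (hμ1 : μ ≤ 1)
    (hμ : IsUniquelyOptimal u0 u1 (σ i) μ) : μ ≤ boundary u0 u1 σ i.succ := by
  induction i using Fin.lastCases with
  | last => simpa using hμ1
  | cast k =>
    rw [boundary_castSucc_succ]
    exact (hμ.lt_crossing (hσ k.castSucc_lt_succ)).le

theorem boundary_strictMono (hopt : ∀ s, ∃ μ ∈ Icc (0 : ℝ) 1, IsUniquelyOptimal u0 u1 s μ) :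
    StrictMono (boundary u0 u1 σ) := by
  refine Fin.strictMono_iff_lt_succ.2 fun i => ?_
  obtain ⟨μ, ⟨hμ0, hμ1⟩, hμ⟩ := hopt (σ i)
  induction i using Fin.lastCases with
  | cast k =>
    rw [boundary_castSucc_succ]
    exact (boundary_castSucc_le hσ hμ0 hμ).trans_lt (hμ.lt_crossing (hσ k.castSucc_lt_succ))
  | last =>
    cases m with
    | zero =>
      rw [Fin.succ_last, boundary_last]
      simp
    | succ m =>
      rw [← Fin.succ_last, boundary_succ_castSucc]
      exact (hμ.crossing_lt (hσ (Fin.last m).castSucc_lt_succ)).trans_le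
        (le_boundary_succ hσ hμ1 hμ)

theorem isUniquelyOptimal_of_mem_Ioo (hmono : Monotone (boundary u0 u1 σ)) {i : Fin (m + 1)}
    (hμ : μ ∈ Ioo (boundary u0 u1 σ i.castSucc) (boundary u0 u1 σ i.succ)) :
    IsUniquelyOptimal u0 u1 (σ i) μ := by
  intro s hs
  obtain ⟨j, rfl⟩ := σ.surjective s
  refine Fin.apply_lt_of_lt_succ_of_succ_lt (g := fun k => payoff u0 u1 (σ k) μ)
    (fun k hk => ?_) (fun k hk => ?_) (ne_of_apply_ne σ hs)
  · rw [payoff_lt_payoff_iff_crossing_lt (hσ k.castSucc_lt_succ), ← boundary_succ_castSucc]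
    exact (hmono (Fin.castSucc_le_castSucc_iff.2 hk)).trans_lt hμ.1
  · rw [payoff_lt_payoff_iff_lt_crossing (hσ k.castSucc_lt_succ), ← boundary_castSucc_succ]
    exact hμ.2.trans_le (hmono (Fin.succ_le_succ_iff.2 hk))

end Boundary

end BayesianPersuasion

open BayesianPersuasion

theorem persuasion_interval_structure_general {S : Type*} [Fintype S] [Nonempty S]
    (u0 u1 : S → ℝ)
    (hstrict : ∀ s : S, ∃ μ ∈ Set.Icc (0:ℝ) 1,
      ∀ s', s' ≠ s → (1 - μ) * u0 s' + μ * u1 s' < (1 - μ) * u0 s + μ * u1 s) :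
    ∃ (e : Fin (Fintype.card S + 1) → ℝ) (σ : Fin (Fintype.card S) ≃ S)
      (C c₁ : ℝ),
      0 < C ∧ 0 < c₁ ∧
      Monotone e ∧ e 0 = 0 ∧ e (Fin.last (Fintype.card S)) = 1 ∧
      (∀ i : Fin (Fintype.card S), C ≤ e i.succ - e i.castSucc) ∧
      (∀ i : Fin (Fintype.card S), ∀ μ ∈ Set.Ioo (e i.castSucc) (e i.succ),
        ∀ s', s' ≠ σ i →
          (1 - μ) * u0 s' + μ * u1 s' < (1 - μ) * u0 (σ i) + μ * u1 (σ i)) ∧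
      (∀ s s' : S, s ≠ s' →
        c₁ ≤ |(u1 s - u0 s) - (u1 s' - u0 s')|) := by
  have hopt : ∀ s, ∃ μ ∈ Icc (0 : ℝ) 1, IsUniquelyOptimal u0 u1 s μ := hstrict
  have hinj := slope_injective fun s => (hopt s).imp fun _ => And.right
  obtain ⟨c₁, hc₁, hgap⟩ := exists_pos_le_of_finite (ι := {p : S × S // p.1 ≠ p.2})
    fun p => abs_pos.2 (sub_ne_zero.2 (hinj.ne p.2))
  obtain ⟨σ, hσ⟩ := hinj.exists_equiv_fin_strictMono
  generalize Fintype.card S = n at σ ⊢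
  obtain _ | m := n
  · exact isEmptyElim (σ.symm (Classical.arbitrary S))
  have he := boundary_strictMono hσ hopt
  obtain ⟨C, hC, hlen⟩ := exists_pos_le_of_finite fun i : Fin (m + 1) =>
    sub_pos.2 (he i.castSucc_lt_succ)
  exact ⟨boundary u0 u1 σ, σ, C, c₁, hC, hc₁, he.monotone, boundary_zero σ, boundary_last σ, hlen,
    fun i μ hμ => isUniquelyOptimal_of_mem_Ioo hσ he.monotone hμ, fun s s' h => hgap ⟨(s, s'), h⟩⟩

/-- In binary-state Bayesian persuasion (receiver utility
`u(s,μ) = (1-μ)·u₀ s + μ·u₁ s`), if every strategy is uniquely optimal for some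
prior, then `[0,1]` is partitioned into `n = |𝒮|` closed intervals (described by
monotone endpoints `e 0 = 0 ≤ … ≤ e n = 1` and an enumeration `σ` of the
strategies) such that `σ i` is the unique optimal strategy at each interior point
of the `i`-th interval; moreover some `C > 0` lower-bounds every interval length,
and the slopes of distinct strategies differ by at least some `c₁ > 0`. -/
theorem persuasion_interval_structure {S : Type*} [Fintype S] [Nonempty S]
    (u0 u1 : S → ℝ)
    (hu0 : ∀ s, u0 s ∈ Set.Icc (0:ℝ) 1) (hu1 : ∀ s, u1 s ∈ Set.Icc (0:ℝ) 1)
    (hstrict : ∀ s : S, ∃ μ ∈ Set.Icc (0:ℝ) 1,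
      ∀ s', s' ≠ s → (1 - μ) * u0 s' + μ * u1 s' < (1 - μ) * u0 s + μ * u1 s) :
    ∃ (e : Fin (Fintype.card S + 1) → ℝ) (σ : Fin (Fintype.card S) ≃ S)
      (C c₁ : ℝ),
      0 < C ∧ 0 < c₁ ∧
      Monotone e ∧ e 0 = 0 ∧ e (Fin.last (Fintype.card S)) = 1 ∧
      (∀ i : Fin (Fintype.card S), C ≤ e i.succ - e i.castSucc) ∧
      (∀ i : Fin (Fintype.card S), ∀ μ ∈ Set.Ioo (e i.castSucc) (e i.succ),
        ∀ s', s' ≠ σ i →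
          (1 - μ) * u0 s' + μ * u1 s' < (1 - μ) * u0 (σ i) + μ * u1 (σ i)) ∧
      (∀ s s' : S, s ≠ s' →
        c₁ ≤ |(u1 s - u0 s) - (u1 s' - u0 s')|) :=
  persuasion_interval_structure_general u0 u1 hstrict
end

section
/- Approximate optimality transfer for single strategies in binary-state persuasion: for any α ∈ [0, c₁·C), if a strategy s is α-approximately optimal at belief μ (i.e. u(s,μ) ≥ max_{s'} u(s',μ) − α), then there exists a belief μ' with |μ' − μ| ≤ α/c₁ at which s is exactly optimal. -/
/-- Auxiliary: if `w` is strictly optimal on the open interval `(a,b)`, then it is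
weakly optimal on the closed interval `[a,b]` (by continuity of affine functions). -/
private lemma closure_opt {S : Type*} (u0 u1 : S → ℝ) (w : S) (a b : ℝ) (hab : a < b)
    (h : ∀ x ∈ Set.Ioo a b, ∀ t : S, t ≠ w →
      (1 - x) * u0 t + x * u1 t < (1 - x) * u0 w + x * u1 w) :
    ∀ x ∈ Set.Icc a b, ∀ t : S,
      (1 - x) * u0 t + x * u1 t ≤ (1 - x) * u0 w + x * u1 w := by
  intro x hx t
  rcases eq_or_ne t w with rfl | ht
  · exact le_rfl
  · have hcl : IsClosed {y : ℝ | (1 - y) * u0 t + y * u1 t ≤ (1 - y) * u0 w + y * u1 w} :=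
      isClosed_le (by fun_prop) (by fun_prop)
    have hsub : Set.Ioo a b ⊆
        {y : ℝ | (1 - y) * u0 t + y * u1 t ≤ (1 - y) * u0 w + y * u1 w} :=
      fun y hy => (h y hy t ht).le
    have h2 := closure_minimal hsub hcl
    rw [closure_Ioo hab.ne] at h2
    exact h2 hx

/-- Approximate optimality transfer for single strategies in
binary-state persuasion: with receiver utility `u(s,μ) = (1-μ)·u₀ s + μ·u₁ s`
(slopes of magnitude ≤ 1, distinct strategies' slopes separated by `c₁ > 0`),
and `[0,1]` partitioned into closed intervals of length at least `C > 0` on whose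
interiors the strategies `σ i` are uniquely optimal: for any `α ∈ [0, c₁·C)`, if
`s` is `α`-approximately optimal at `μ ∈ [0,1]`, then `s` is exactly optimal at
some belief `μ' ∈ [0,1]` with `|μ' − μ| ≤ α / c₁`. -/
theorem approx_opt_transfer {S : Type*} [Fintype S] (u0 u1 : S → ℝ)
    (hslope_bd : ∀ t : S, |u1 t - u0 t| ≤ 1)
    (c₁ C : ℝ) (hc₁ : 0 < c₁) (hC : 0 < C)
    (hgap : ∀ t t' : S, t ≠ t' → c₁ ≤ |(u1 t - u0 t) - (u1 t' - u0 t')|)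
    (e : Fin (Fintype.card S + 1) → ℝ) (hmono : Monotone e)
    (h0 : e 0 = 0) (hlast : e (Fin.last (Fintype.card S)) = 1)
    (hlen : ∀ i : Fin (Fintype.card S), C ≤ e i.succ - e i.castSucc)
    (σ : Fin (Fintype.card S) ≃ S)
    (hopt : ∀ i : Fin (Fintype.card S), ∀ μ ∈ Set.Ioo (e i.castSucc) (e i.succ),
      ∀ t : S, t ≠ σ i →
        (1 - μ) * u0 t + μ * u1 t < (1 - μ) * u0 (σ i) + μ * u1 (σ i))
    (α μ : ℝ) (hα0 : 0 ≤ α) (hα : α < c₁ * C) (hμ : μ ∈ Set.Icc (0:ℝ) 1)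
    (s : S)
    (happrox : ∀ t : S, (1 - μ) * u0 t + μ * u1 t ≤
      (1 - μ) * u0 s + μ * u1 s + α) :
    ∃ μ' ∈ Set.Icc (0:ℝ) 1, |μ' - μ| ≤ α / c₁ ∧
      ∀ t : S, (1 - μ') * u0 t + μ' * u1 t ≤ (1 - μ') * u0 s + μ' * u1 s := by
  classical
  have hnpos : 0 < Fintype.card S := Fintype.card_pos_iff.mpr ⟨s⟩

  -- basic interval facts
  have hlen' : ∀ k : Fin (Fintype.card S), e k.castSucc + C ≤ e k.succ := fun k => by
    have := hlen k; linarith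
  have hltk : ∀ k : Fin (Fintype.card S), e k.castSucc < e k.succ := fun k => by
    have := hlen' k; linarith
  have he0 : ∀ m : Fin (Fintype.card S + 1), (0:ℝ) ≤ e m := fun m => by
    have := hmono (Fin.zero_le m); rwa [h0] at this
  have he1 : ∀ m : Fin (Fintype.card S + 1), e m ≤ 1 := fun m => by
    have := hmono (Fin.le_last m); rwa [hlast] at this
  -- weak optimality on closed intervals
  have hweak : ∀ k : Fin (Fintype.card S), ∀ x ∈ Set.Icc (e k.castSucc) (e k.succ), ∀ t : S,
      (1 - x) * u0 t + x * u1 t ≤ (1 - x) * u0 (σ k) + x * u1 (σ k) :=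
    fun k => closure_opt u0 u1 (σ k) _ _ (hltk k) (fun x hx t ht => hopt k x hx t ht)
  -- a handy affine identity
  have keyid : ∀ (t : S) (y z : ℝ), (1-y) * u0 t + y * u1 t =
      ((1-z) * u0 t + z * u1 t) + (u1 t - u0 t) * (y - z) := fun t y z => by ring
  -- locate μ
  obtain ⟨i, hi1, hi2⟩ : ∃ i : Fin (Fintype.card S), e i.castSucc ≤ μ ∧ μ ≤ e i.succ := by
    let T : Finset (Fin (Fintype.card S)) := Finset.univ.filter fun k => e k.castSucc ≤ μ
    have hmem0 : (⟨0, hnpos⟩ : Fin (Fintype.card S)) ∈ T := by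
      simp only [T, Finset.mem_filter, Finset.mem_univ, true_and]
      have h00 : ((⟨0, hnpos⟩ : Fin (Fintype.card S)).castSucc) = (0 : Fin (Fintype.card S + 1)) := by
        apply Fin.ext; simp
      rw [h00, h0]; exact hμ.1
    have hT : T.Nonempty := ⟨_, hmem0⟩
    refine ⟨T.max' hT, (Finset.mem_filter.mp (T.max'_mem hT)).2, ?_⟩
    set i := T.max' hT with hidef
    by_cases hcase : i.val + 1 < Fintype.card S
    · by_contra hcon
      push_neg at hcon
      have hmem : (⟨i.val + 1, hcase⟩ : Fin (Fintype.card S)) ∈ T := by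
        simp only [T, Finset.mem_filter, Finset.mem_univ, true_and]
        have hsucc : ((⟨i.val + 1, hcase⟩ : Fin (Fintype.card S)).castSucc) = i.succ := by
          apply Fin.ext; simp
        rw [hsucc]; exact hcon.le
      have hle := T.le_max' _ hmem
      rw [← hidef] at hle
      rw [Fin.le_def] at hle
      simp at hle
    · have hil : i.succ = Fin.last (Fintype.card S) := by
        apply Fin.ext
        have := i.isLt
        simp only [Fin.val_succ, Fin.val_last]
        omega
      rw [hil, hlast]; exact hμ.2
  set j := σ.symm s with hjdef
  have hsj : σ j = s := σ.apply_symm_apply s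
  rcases Nat.lt_trichotomy j.val i.val with hlt1 | heq | hgt1
  -- ================= Case j < i =================
  · by_cases hadj : j.val + 1 = i.val
    · -- adjacent on the left: μ' = e i.castSucc = e j.succ
      have hjc : (j.succ : Fin (Fintype.card S + 1)) = i.castSucc := by
        apply Fin.ext; simp [hadj]
      set μ' := e i.castSucc with hμ'def
      have hμ'mem : μ' ∈ Set.Icc (0:ℝ) 1 := ⟨he0 _, he1 _⟩
      have hjeq : e j.succ = μ' := by rw [hjc]
      have hoptμ' : ∀ t : S, (1-μ') * u0 t + μ' * u1 t ≤ (1-μ') * u0 s + μ' * u1 s := by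
        intro t
        have hmem : μ' ∈ Set.Icc (e j.castSucc) (e j.succ) :=
          ⟨hjeq ▸ (hltk j).le, hjeq.ge⟩
        have := hweak j μ' hmem t
        rwa [hsj] at this
      have hsne : s ≠ σ i := by
        intro h
        have : j = i := σ.injective (hsj.trans h)
        rw [this] at hadj; omega
      -- slope separation: bσi − bs ≥ c₁
      set x := μ' + C/2 with hxdef
      have hxmem : x ∈ Set.Ioo (e i.castSucc) (e i.succ) :=
        ⟨by simp [hxdef]; linarith, by have := hlen' i; simp [hxdef]; linarith⟩
      have hstrict := hopt i x hxmem s hsne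
      have hwk := hoptμ' (σ i)
      have hprod : 0 < ((u1 (σ i) - u0 (σ i)) - (u1 s - u0 s)) * (x - μ') := by
        linarith [keyid s x μ', keyid (σ i) x μ']
      have hbpos : 0 < (u1 (σ i) - u0 (σ i)) - (u1 s - u0 s) := by
        rcases mul_pos_iff.mp hprod with ⟨h1, _⟩ | ⟨_, h2⟩
        · exact h1
        · exfalso; have : (0:ℝ) < x - μ' := by simp [hxdef]; linarith
          linarith
      have hsep : c₁ ≤ (u1 (σ i) - u0 (σ i)) - (u1 s - u0 s) := by
        have := hgap (σ i) s (fun h => hsne h.symm)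
        rwa [abs_of_pos hbpos] at this
      -- distance bound
      have hw2 : (1-μ') * u0 s + μ' * u1 s ≤ (1-μ') * u0 (σ i) + μ' * u1 (σ i) :=
        hweak i μ' ⟨le_rfl, (hltk i).le⟩ s
      have hd0 : (0:ℝ) ≤ μ - μ' := by linarith [hi1]
      have hmul : c₁ * (μ - μ') ≤ ((u1 (σ i) - u0 (σ i)) - (u1 s - u0 s)) * (μ - μ') :=
        mul_le_mul_of_nonneg_right hsep hd0
      have h1 := happrox (σ i)
      have hdist : c₁ * (μ - μ') ≤ α := by
        linarith [keyid s μ μ', keyid (σ i) μ μ']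
      refine ⟨μ', hμ'mem, ?_, hoptμ'⟩
      rw [abs_sub_comm, abs_of_nonneg hd0, le_div_iff₀ hc₁]
      linarith
    · -- far on the left: contradiction
      exfalso
      have hj2 : j.val + 2 ≤ i.val := by omega
      have hkLt : j.val + 1 < Fintype.card S := by have := i.isLt; omega
      set k : Fin (Fintype.card S) := ⟨j.val + 1, hkLt⟩ with hkdef
      have hkcs : (k.castSucc : Fin (Fintype.card S + 1)) = j.succ := by
        apply Fin.ext; simp [hkdef]
      set p := e j.succ with hpdef
      have hkne : σ k ≠ s := by
        intro h
        have : k = j := σ.injective (h.trans hsj.symm)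
        have := congrArg Fin.val this
        simp [hkdef] at this
      -- σ k weakly optimal at p (left endpoint of its interval)
      have hpe : e k.castSucc = p := by rw [hkcs]
      have hw : (1-p) * u0 s + p * u1 s ≤ (1-p) * u0 (σ k) + p * u1 (σ k) :=
        hweak k p ⟨hpe.ge, by rw [← hpe]; exact (hltk k).le⟩ s
      -- slope separation via interior of S_j
      set x := p - C/2 with hxdef
      have hxmem : x ∈ Set.Ioo (e j.castSucc) (e j.succ) :=
        ⟨by have := hlen' j; simp [hxdef]; linarith, by simp [hxdef]; linarith⟩
      have hstrict := hopt j x hxmem (σ k) (by rw [hsj]; exact hkne)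
      rw [hsj] at hstrict
      have hprod : 0 < ((u1 (σ k) - u0 (σ k)) - (u1 s - u0 s)) * (p - x) := by
        linarith [keyid s x p, keyid (σ k) x p]
      have hbpos : 0 < (u1 (σ k) - u0 (σ k)) - (u1 s - u0 s) := by
        rcases mul_pos_iff.mp hprod with ⟨h1, _⟩ | ⟨_, h2⟩
        · exact h1
        · exfalso; have : (0:ℝ) < p - x := by simp [hxdef]; linarith
          linarith
      have hsep : c₁ ≤ (u1 (σ k) - u0 (σ k)) - (u1 s - u0 s) := by
        have := hgap (σ k) s hkne
        rwa [abs_of_pos hbpos] at this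
      -- distance: p ≤ μ - C
      have hd1 : e k.succ ≤ e i.castSucc := by
        apply hmono
        rw [Fin.le_def]
        simp [hkdef]
        omega
      have hdC : C ≤ μ - p := by
        have h2 := hlen' k
        rw [hpe] at h2
        linarith [hi1]
      have hmul : c₁ * C ≤ ((u1 (σ k) - u0 (σ k)) - (u1 s - u0 s)) * (μ - p) :=
        mul_le_mul hsep hdC hC.le hbpos.le
      have happ := happrox (σ k)
      linarith [keyid s μ p, keyid (σ k) μ p]
  -- ================= Case j = i =================
  · have hji : j = i := Fin.ext heq
    have hsi : σ i = s := by rw [← hji]; exact hsj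
    refine ⟨μ, hμ, ?_, ?_⟩
    · rw [sub_self, abs_zero]
      positivity
    · intro t
      have := hweak i μ ⟨hi1, hi2⟩ t
      rwa [hsi] at this
  -- ================= Case j > i =================
  · by_cases hadj : j.val = i.val + 1
    · -- adjacent on the right: μ' = e i.succ = e j.castSucc
      have hjc : (j.castSucc : Fin (Fintype.card S + 1)) = i.succ := by
        apply Fin.ext; simp [hadj]
      set μ' := e i.succ with hμ'def
      have hμ'mem : μ' ∈ Set.Icc (0:ℝ) 1 := ⟨he0 _, he1 _⟩
      have hjeq : e j.castSucc = μ' := by rw [hjc]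
      have hoptμ' : ∀ t : S, (1-μ') * u0 t + μ' * u1 t ≤ (1-μ') * u0 s + μ' * u1 s := by
        intro t
        have hmem : μ' ∈ Set.Icc (e j.castSucc) (e j.succ) :=
          ⟨hjeq.le, by rw [← hjeq]; exact (hltk j).le⟩
        have := hweak j μ' hmem t
        rwa [hsj] at this
      have hsne : s ≠ σ i := by
        intro h
        have : j = i := σ.injective (hsj.trans h)
        rw [this] at hadj; omega
      -- slope separation: bs − bσi ≥ c₁
      set x := μ' - C/2 with hxdef
      have hxmem : x ∈ Set.Ioo (e i.castSucc) (e i.succ) :=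
        ⟨by have := hlen' i; simp [hxdef]; linarith, by simp [hxdef]; linarith⟩
      have hstrict := hopt i x hxmem s hsne
      have hwk := hoptμ' (σ i)
      have hprod : 0 < ((u1 s - u0 s) - (u1 (σ i) - u0 (σ i))) * (μ' - x) := by
        linarith [keyid s μ' x, keyid (σ i) μ' x]
      have hbpos : 0 < (u1 s - u0 s) - (u1 (σ i) - u0 (σ i)) := by
        rcases mul_pos_iff.mp hprod with ⟨h1, _⟩ | ⟨_, h2⟩
        · exact h1
        · exfalso; have : (0:ℝ) < μ' - x := by simp [hxdef]; linarith
          linarith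
      have hsep : c₁ ≤ (u1 s - u0 s) - (u1 (σ i) - u0 (σ i)) := by
        have := hgap s (σ i) hsne
        rwa [abs_of_pos hbpos] at this
      -- distance bound
      have hw2 : (1-μ') * u0 s + μ' * u1 s ≤ (1-μ') * u0 (σ i) + μ' * u1 (σ i) :=
        hweak i μ' ⟨(hltk i).le, le_rfl⟩ s
      have hd0 : (0:ℝ) ≤ μ' - μ := by linarith [hi2]
      have hmul : c₁ * (μ' - μ) ≤ ((u1 s - u0 s) - (u1 (σ i) - u0 (σ i))) * (μ' - μ) :=
        mul_le_mul_of_nonneg_right hsep hd0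
      have h1 := happrox (σ i)
      have hdist : c₁ * (μ' - μ) ≤ α := by
        linarith [keyid s μ μ', keyid (σ i) μ μ']
      refine ⟨μ', hμ'mem, ?_, hoptμ'⟩
      rw [abs_of_nonneg hd0, le_div_iff₀ hc₁]
      linarith
    · -- far on the right: contradiction
      exfalso
      have hj2 : i.val + 2 ≤ j.val := by omega
      have hkLt : j.val - 1 < Fintype.card S := by have := j.isLt; omega
      set k : Fin (Fintype.card S) := ⟨j.val - 1, hkLt⟩ with hkdef
      have hkcs : (k.succ : Fin (Fintype.card S + 1)) = j.castSucc := by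
        apply Fin.ext; simp [hkdef]; omega
      set p := e j.castSucc with hpdef
      have hkne : σ k ≠ s := by
        intro h
        have : k = j := σ.injective (h.trans hsj.symm)
        have := congrArg Fin.val this
        simp [hkdef] at this
        omega
      -- σ k weakly optimal at p (right endpoint of its interval)
      have hpe : e k.succ = p := by rw [hkcs]
      have hw : (1-p) * u0 s + p * u1 s ≤ (1-p) * u0 (σ k) + p * u1 (σ k) :=
        hweak k p ⟨by rw [← hpe]; exact (hltk k).le, hpe.ge⟩ s
      -- slope separation via interior of S_j
      set x := p + C/2 with hxdef
      have hxmem : x ∈ Set.Ioo (e j.castSucc) (e j.succ) :=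
        ⟨by simp [hxdef]; linarith, by have := hlen' j; simp [hxdef]; linarith⟩
      have hstrict := hopt j x hxmem (σ k) (by rw [hsj]; exact hkne)
      rw [hsj] at hstrict
      have hprod : 0 < ((u1 s - u0 s) - (u1 (σ k) - u0 (σ k))) * (x - p) := by
        linarith [keyid s x p, keyid (σ k) x p]
      have hbpos : 0 < (u1 s - u0 s) - (u1 (σ k) - u0 (σ k)) := by
        rcases mul_pos_iff.mp hprod with ⟨h1, _⟩ | ⟨_, h2⟩
        · exact h1
        · exfalso; have : (0:ℝ) < x - p := by simp [hxdef]; linarith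
          linarith
      have hsep : c₁ ≤ (u1 s - u0 s) - (u1 (σ k) - u0 (σ k)) := by
        have := hgap s (σ k) (fun h => hkne h.symm)
        rwa [abs_of_pos hbpos] at this
      -- distance: μ + C ≤ p
      have hd1 : e i.succ ≤ e k.castSucc := by
        apply hmono
        rw [Fin.le_def]
        simp [hkdef]
        omega
      have hdC : C ≤ p - μ := by
        have h2 := hlen' k
        rw [hpe] at h2
        linarith [hi2]
      have hmul : c₁ * C ≤ ((u1 s - u0 s) - (u1 (σ k) - u0 (σ k))) * (p - μ) :=
        mul_le_mul hsep hdC hC.le hbpos.le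
      have happ := happrox (σ k)
      linarith [keyid s μ p, keyid (σ k) μ p]
end

section
/- Principal payoff upper bound against non-anticipating no-regret agents: in the two-state contracting game (states M, H uniform i.i.d.; agent actions work/shirk; under linear contract p_t the principal gets 2(1−p_t) and the agent gets 2p_t − 1 when the state is M and the agent works; the agent gets −1 for working in state H; shirking yields 0 to both), if the principal's policy p_t and the agent's action a_t are both independent of the current state y_t, and the agent's expected total utility is at least −o(T) (as guaranteed by never doing worse than always shirking), then the principal's expected total utility is at most o(T). Equivalently, no constant c > 0 admits expected principal utility ≥ c·T for all large T. -/
/-- Principal payoff upper bound against non-anticipating agents in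
the two-state contracting game. States `ω : Fin T → Bool` are i.i.d. uniform
(`true` = `M`); auxiliary randomness `r : R` with weights `w`. The principal's
contract `p t ω r ∈ [0,1]` and the agent's action `a t ω r` (`true` = `work`)
depend on the history only through states strictly before round `t`. Per-round
payoffs: if `y_t = M` and the agent works, the principal gets `2(1 − p_t)` and
the agent gets `2 p_t − 1`; if `y_t = H` and the agent works the agent gets `−1`
(principal `0`); shirking yields `0` to both. If the agent's expected total
utility is at least `−ε·T`, then the principal's expected total utility is at
most `ε·T`. -/
theorem principal_payoff_upper_bound (T : ℕ) (ε : ℝ) (R : Type*) [Fintype R]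
    (w : R → ℝ) (hw0 : ∀ r, 0 ≤ w r) (hw1 : ∑ r, w r = 1)
    (p : Fin T → (Fin T → Bool) → R → ℝ)
    (a : Fin T → (Fin T → Bool) → R → Bool)
    (hp : ∀ t ω r, p t ω r ∈ Set.Icc (0:ℝ) 1)
    (hpmeas : ∀ (t : Fin T) (ω ω' : Fin T → Bool) (r : R),
      (∀ s : Fin T, s < t → ω s = ω' s) → p t ω r = p t ω' r)
    (hameas : ∀ (t : Fin T) (ω ω' : Fin T → Bool) (r : R),
      (∀ s : Fin T, s < t → ω s = ω' s) → a t ω r = a t ω' r)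
    (hagent : -(ε * T) ≤
      ∑ ω : Fin T → Bool, ∑ r : R, ((1 : ℝ) / 2 ^ T) * w r *
        ∑ t : Fin T,
          (if a t ω r = true then
            (if ω t = true then 2 * p t ω r - 1 else -1)
          else 0)) :
    ∑ ω : Fin T → Bool, ∑ r : R, ((1 : ℝ) / 2 ^ T) * w r *
        ∑ t : Fin T,
          (if a t ω r = true ∧ ω t = true then 2 * (1 - p t ω r) else 0) ≤
      ε * T := by
  -- combined per-round term cancels under flipping coordinate t
  have key : ∀ (t : Fin T) (r : R),
      ∑ ω : Fin T → Bool,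
        (if a t ω r = true then (if ω t = true then (1:ℝ) else -1) else 0)
          * p t ω r ^ 0 = 0 := by
    intro t r
    apply Finset.sum_ninvolution (fun ω => Function.update ω t (!ω t))
    · intro ω
      have hlt : ∀ s : Fin T, s < t → ω s = Function.update ω t (!ω t) s := by
        intro s hs
        rw [Function.update_of_ne (ne_of_lt hs)]
      have ha := hameas t ω (Function.update ω t (!ω t)) r hlt
      have hp' := hpmeas t ω (Function.update ω t (!ω t)) r hlt
      have hflip : Function.update ω t (!ω t) t = !ω t := Function.update_self _ _ _
      rw [← ha, ← hp', hflip]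
      by_cases h : a t ω r = true <;> simp [h] <;> cases hb : ω t <;> simp
    · intro ω _
      intro hcontra
      have := congrFun hcontra t
      rw [Function.update_self] at this
      cases h : ω t <;> rw [h] at this <;> simp at this
    · intro ω; exact Finset.mem_univ _
    · intro ω
      funext s
      by_cases hs : s = t
      · subst hs; simp
      · simp [Function.update_of_ne hs]
  have hcomb :
      (∑ ω : Fin T → Bool, ∑ r : R, ((1 : ℝ) / 2 ^ T) * w r *
        ∑ t : Fin T,
          (if a t ω r = true ∧ ω t = true then 2 * (1 - p t ω r) else 0))
      + (∑ ω : Fin T → Bool, ∑ r : R, ((1 : ℝ) / 2 ^ T) * w r *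
        ∑ t : Fin T,
          (if a t ω r = true then
            (if ω t = true then 2 * p t ω r - 1 else -1)
          else 0)) = 0 := by
    have : ∀ (ω : Fin T → Bool) (r : R) (t : Fin T),
        (if a t ω r = true ∧ ω t = true then 2 * (1 - p t ω r) else 0)
        + (if a t ω r = true then
            (if ω t = true then 2 * p t ω r - 1 else -1) else 0)
        = (if a t ω r = true then (if ω t = true then (1:ℝ) else -1) else 0)
            * p t ω r ^ 0 := by
      intro ω r t
      by_cases h : a t ω r = true <;> by_cases h2 : ω t = true <;>
        simp [h, h2] <;> ring
    rw [← Finset.sum_add_distrib]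
    have h2 : ∀ ω : Fin T → Bool,
        (∑ r : R, ((1 : ℝ) / 2 ^ T) * w r *
          ∑ t : Fin T,
            (if a t ω r = true ∧ ω t = true then 2 * (1 - p t ω r) else 0))
        + (∑ r : R, ((1 : ℝ) / 2 ^ T) * w r *
          ∑ t : Fin T,
            (if a t ω r = true then
              (if ω t = true then 2 * p t ω r - 1 else -1) else 0))
        = ∑ r : R, ((1 : ℝ) / 2 ^ T) * w r *
            ∑ t : Fin T,
              (if a t ω r = true then (if ω t = true then (1:ℝ) else -1) else 0)
                * p t ω r ^ 0 := by
      intro ω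
      rw [← Finset.sum_add_distrib]
      refine Finset.sum_congr rfl fun r _ => ?_
      rw [← mul_add, ← Finset.sum_add_distrib]
      congr 1
      exact Finset.sum_congr rfl fun t _ => this ω r t
    calc ∑ ω : Fin T → Bool, _ = ∑ ω : Fin T → Bool, ∑ r : R,
            ((1 : ℝ) / 2 ^ T) * w r *
            ∑ t : Fin T,
              (if a t ω r = true then (if ω t = true then (1:ℝ) else -1) else 0)
                * p t ω r ^ 0 := Finset.sum_congr rfl fun ω _ => h2 ω
      _ = 0 := by
        rw [Finset.sum_comm]
        refine Finset.sum_eq_zero fun r _ => ?_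
        simp_rw [Finset.mul_sum]
        rw [Finset.sum_comm]
        refine Finset.sum_eq_zero fun t _ => ?_
        rw [← Finset.mul_sum, key t r, mul_zero]
  linarith [hagent, hcomb]
end
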